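/- arXiv:2411.12902 — 3 statements merged into one kernel-verified Lean document; each statement's English description precedes it below -/
import Mathlib

section
/- Let N ≥ 3, σ > -2, p > p_c(σ), K₀ = ((σ+2)/(p-1))(N-2-(σ+2)/(p-1)) > 0 and K = N-2-2(σ+2)/(p-1). Define U(r,t) = (K₀(p+1)/2 · r^{-(σ+2)})^{1/(p-1)} · (1 - tanh²((p-1)√K₀ (ln r + Kt)/2))^{1/(p-1)} for r > 0. Then U satisfies r^{-2} U_t = U_rr + ((N-1)/r) U_r + r^σ U^p for all (r,t) ∈ (0,∞) × ℝ; in particular U is an eternal solution defined for all t ∈ ℝ. -/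
/-!
With `m = (σ + 2)/(p - 1)`, the ansatz `U(r, t) = r^{-m} φ(log r + K t)` turns the equation into
`r^{-m-2} (φ'' + (N - 2 - 2m - K) φ' - m (N - 2 - m) φ + φ^p) = 0`, because `r^σ (r^{-m})^p = r^{-m-2}`.
The choice `K = N - 2 - 2m` kills the first-order term, leaving the autonomous equation
`φ'' = K₀ φ - φ^p`, whose homoclinic orbit is the `sech^{2/(p-1)}` profile appearing in `U`.
-/

open Real

theorem Real.hasDerivAt_tanh (x : ℝ) : HasDerivAt tanh (1 - tanh x ^ 2) x := by
  have h := (hasDerivAt_sinh x).div (hasDerivAt_cosh x) (cosh_pos x).ne'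
  rw [show sinh / cosh = tanh from funext fun y => (tanh_eq_sinh_div_cosh y).symm] at h
  refine h.congr_deriv ?_
  have := cosh_sq_sub_sinh_sq x
  rw [tanh_eq_sinh_div_cosh]
  field_simp

theorem hasDerivAt_one_sub_tanh_sq_rpow (a : ℝ) {f : ℝ → ℝ} {f' x : ℝ} (hf : HasDerivAt f f' x) :
    HasDerivAt (fun y => (1 - tanh (f y) ^ 2) ^ a)
      (-2 * a * f' * tanh (f x) * (1 - tanh (f x) ^ 2) ^ a) x := by
  have hS : 0 < 1 - tanh (f x) ^ 2 := sub_pos.mpr (tanh_sq_lt_one _)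
  have h := ((((hasDerivAt_tanh (f x)).comp x hf).pow 2).const_sub 1).rpow_const (p := a)
    (Or.inl hS.ne')
  refine h.congr_deriv ?_
  simp only [Function.comp, Pi.pow_apply]
  rw [rpow_sub_one hS.ne']
  field_simp
  ring

/-- `(K₀ (p+1)/2)^{1/(p-1)} sech^{2/(p-1)}((p-1)√K₀ s/2)`, the orbit of `φ'' = K₀ φ - φ^p`
homoclinic to `0`. -/
noncomputable def homoclinicProfile (p K₀ s : ℝ) : ℝ :=
  (K₀ * (p + 1) / 2) ^ (1 / (p - 1)) * (1 - tanh ((p - 1) * √K₀ * s / 2) ^ 2) ^ (1 / (p - 1))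

theorem homoclinicProfile_nonneg {p K₀ : ℝ} (h : 0 ≤ K₀ * (p + 1)) (s : ℝ) :
    0 ≤ homoclinicProfile p K₀ s := by
  have := tanh_sq_lt_one ((p - 1) * √K₀ * s / 2)
  unfold homoclinicProfile
  have : 0 ≤ K₀ * (p + 1) / 2 := by positivity
  positivity

theorem hasDerivAt_homoclinicProfile {p : ℝ} (hp : p ≠ 1) (K₀ s : ℝ) :
    HasDerivAt (homoclinicProfile p K₀)
      (-√K₀ * tanh ((p - 1) * √K₀ * s / 2) * homoclinicProfile p K₀ s) s := by
  have hθ : HasDerivAt (fun s : ℝ => (p - 1) * √K₀ * s / 2) ((p - 1) * √K₀ / 2) s := by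
    simpa using ((hasDerivAt_id s).const_mul ((p - 1) * √K₀)).div_const 2
  refine ((hasDerivAt_one_sub_tanh_sq_rpow (1 / (p - 1)) hθ).const_mul
    ((K₀ * (p + 1) / 2) ^ (1 / (p - 1)))).congr_deriv ?_
  have : p - 1 ≠ 0 := sub_ne_zero.mpr hp
  unfold homoclinicProfile
  field_simp

theorem homoclinicProfile_rpow {p K₀ : ℝ} (hp : 1 < p) (hK₀ : 0 < K₀) (s : ℝ) :
    homoclinicProfile p K₀ s ^ p =
      K₀ * (p + 1) / 2 * (1 - tanh ((p - 1) * √K₀ * s / 2) ^ 2) * homoclinicProfile p K₀ s := by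
  set C := K₀ * (p + 1) / 2
  set S := 1 - tanh ((p - 1) * √K₀ * s / 2) ^ 2
  have hC : 0 < C := by positivity
  have hS : 0 < S := sub_pos.mpr (tanh_sq_lt_one _)
  have hexp : 1 / (p - 1) * p = 1 / (p - 1) + 1 := by
    field_simp [(sub_pos.mpr hp).ne']
    ring
  unfold homoclinicProfile
  rw [mul_rpow (by positivity) (by positivity), ← rpow_mul hC.le, ← rpow_mul hS.le, hexp,
    rpow_add_one hC.ne', rpow_add_one hS.ne']
  ring

theorem hasDerivAt_deriv_homoclinicProfile {p K₀ : ℝ} (hp : 1 < p) (hK₀ : 0 < K₀) (s : ℝ) :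
    HasDerivAt (fun s => -√K₀ * tanh ((p - 1) * √K₀ * s / 2) * homoclinicProfile p K₀ s)
      (K₀ * homoclinicProfile p K₀ s - homoclinicProfile p K₀ s ^ p) s := by
  have hθ : HasDerivAt (fun s : ℝ => (p - 1) * √K₀ * s / 2) ((p - 1) * √K₀ / 2) s := by
    simpa using ((hasDerivAt_id s).const_mul ((p - 1) * √K₀)).div_const 2
  have htanh := ((hasDerivAt_tanh _).comp s hθ).const_mul (-√K₀)
  refine (htanh.mul (hasDerivAt_homoclinicProfile hp.ne' K₀ s)).congr_deriv ?_
  rw [homoclinicProfile_rpow hp hK₀]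
  have := sq_sqrt hK₀.le
  simp only [Function.comp]
  linear_combination homoclinicProfile p K₀ s *
    ((tanh ((p - 1) * √K₀ * s / 2) ^ 2 - 1) * (p + 1) / 2 + 1) * this

theorem hasDerivAt_rpow_neg_mul_comp_log {f : ℝ → ℝ} {m c ρ d : ℝ} (hρ : 0 < ρ)
    (hf : HasDerivAt f d (log ρ + c)) :
    HasDerivAt (fun x => x ^ (-m) * f (log x + c))
      (ρ ^ (-(m + 1)) * (d - m * f (log ρ + c))) ρ := by
  have hlog : HasDerivAt (fun x => log x + c) ρ⁻¹ ρ := (hasDerivAt_log hρ.ne').add_const c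
  refine ((hasDerivAt_rpow_const (p := -m) (Or.inl hρ.ne')).mul (hf.comp ρ hlog)).congr_deriv ?_
  rw [show -(m + 1) = -m - 1 by ring, rpow_sub_one hρ.ne']
  simp only [Function.comp]
  field_simp
  ring

theorem radialEquation_of_eq_rpow_mul_comp_log {N σ p m K : ℝ} {φ φ' : ℝ → ℝ}
    (hm : m * (p - 1) = σ + 2) (hK : K = N - 2 - 2 * m) (hφ_nonneg : ∀ s, 0 ≤ φ s)
    (hφ : ∀ s, HasDerivAt φ (φ' s) s)
    (hφ' : ∀ s, HasDerivAt φ' (m * (N - 2 - m) * φ s - φ s ^ p) s)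
    {U : ℝ → ℝ → ℝ} (hU : ∀ r, 0 < r → ∀ t, U r t = r ^ (-m) * φ (log r + K * t))
    {r : ℝ} (hr : 0 < r) (t : ℝ) :
    r ^ (-2 : ℝ) * deriv (fun s => U r s) t =
      deriv (fun ρ => deriv (fun ρ' => U ρ' t) ρ) r
        + ((N - 1) / r) * deriv (fun ρ => U ρ t) r + r ^ σ * U r t ^ p := by
  have hUt : deriv (fun s => U r s) t = r ^ (-m) * (K * φ' (log r + K * t)) := by
    have hlin : HasDerivAt (fun s => log r + K * s) K t := by
      simpa using ((hasDerivAt_id t).const_mul K).const_add (log r)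
    rw [funext (hU r hr)]
    exact (((hφ _).comp t hlin).const_mul _).deriv.trans (by ring)
  have hUr : ∀ ρ, 0 < ρ → deriv (fun x => U x t) ρ =
      ρ ^ (-(m + 1)) * (φ' (log ρ + K * t) - m * φ (log ρ + K * t)) := by
    intro ρ hρ
    have hev : (fun x => U x t) =ᶠ[nhds ρ] fun x => x ^ (-m) * φ (log x + K * t) := by
      filter_upwards [eventually_gt_nhds hρ] with x hx using hU x hx t
    rw [hev.deriv_eq, (hasDerivAt_rpow_neg_mul_comp_log hρ (hφ _)).deriv]
  have hUrr : deriv (fun ρ => deriv (fun x => U x t) ρ) r =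
      r ^ (-(m + 1 + 1)) * (m * (N - 2 - m) * φ (log r + K * t) - φ (log r + K * t) ^ p
        - m * φ' (log r + K * t)
        - (m + 1) * (φ' (log r + K * t) - m * φ (log r + K * t))) := by
    have hev : (fun ρ => deriv (fun x => U x t) ρ) =ᶠ[nhds r]
        fun ρ => ρ ^ (-(m + 1)) * (φ' (log ρ + K * t) - m * φ (log ρ + K * t)) := by
      filter_upwards [eventually_gt_nhds hr] with x hx using hUr x hx
    rw [hev.deriv_eq, (hasDerivAt_rpow_neg_mul_comp_log (f := fun s => φ' s - m * φ s) hr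
      ((hφ' _).sub ((hφ _).const_mul m))).deriv]
  have hpow : r ^ σ * (r ^ (-m) * φ (log r + K * t)) ^ p =
      r ^ (-m) * φ (log r + K * t) ^ p * r ^ (-2 : ℝ) := by
    have hexp : r ^ σ * r ^ (-m * p) = r ^ (-m) * r ^ (-2 : ℝ) := by
      rw [← rpow_add hr, ← rpow_add hr]
      congr 1
      linear_combination -hm
    rw [mul_rpow (rpow_nonneg hr.le _) (hφ_nonneg _), ← rpow_mul hr.le]
    linear_combination φ (log r + K * t) ^ p * hexp
  have hr1 : r ^ (-(m + 1)) = r ^ (-m) / r := by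
    rw [show -(m + 1) = -m - 1 by ring, rpow_sub_one hr.ne']
  have hr2 : r ^ (-(m + 1 + 1)) = r ^ (-m) / r / r := by
    rw [show -(m + 1 + 1) = -(m + 1) - 1 by ring, rpow_sub_one hr.ne', hr1]
  have hr' : r ^ (-2 : ℝ) = 1 / r / r := by
    rw [show (-2 : ℝ) = -1 - 1 by norm_num, rpow_sub_one hr.ne', rpow_neg_one, one_div]
  rw [hUt, hUrr, hUr r hr, hU r hr, hpow, hr1, hr2, hr', hK]
  field_simp
  ring

theorem stmt_8 (N : ℕ) (hN : 3 ≤ N) (σ p : ℝ) (hσ : -2 < σ)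
    (hp : ((N : ℝ) + σ) / ((N : ℝ) - 2) < p)
    (K₀ K : ℝ)
    (hK₀ : K₀ = ((σ + 2) / (p - 1)) * ((N : ℝ) - 2 - (σ + 2) / (p - 1)))
    (hK : K = (N : ℝ) - 2 - 2 * (σ + 2) / (p - 1))
    (U : ℝ → ℝ → ℝ)
    (hU : ∀ r : ℝ, 0 < r → ∀ t : ℝ,
      U r t = (K₀ * (p + 1) / 2 * r ^ (-(σ + 2))) ^ (1 / (p - 1)) *
        (1 - Real.tanh ((p - 1) * Real.sqrt K₀ * (Real.log r + K * t) / 2) ^ 2)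
          ^ (1 / (p - 1))) :
    ∀ r : ℝ, 0 < r → ∀ t : ℝ,
      r ^ (-2 : ℝ) * deriv (fun s => U r s) t =
        deriv (fun ρ => deriv (fun ρ' => U ρ' t) ρ) r
          + (((N : ℝ) - 1) / r) * deriv (fun ρ => U ρ t) r
          + r ^ σ * U r t ^ p := by
  intro r hr t
  have hN2 : (0 : ℝ) < N - 2 := by
    have : (3 : ℝ) ≤ N := by exact_mod_cast hN
    linarith
  rw [div_lt_iff₀ hN2] at hp
  have hp₁ : 0 < p - 1 := by nlinarith
  set m := (σ + 2) / (p - 1)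
  have hm : m * (p - 1) = σ + 2 := div_mul_cancel₀ _ hp₁.ne'
  have hK₀_pos : 0 < K₀ := by
    have hm_lt : m < N - 2 := by
      rw [div_lt_iff₀ hp₁]
      linarith
    rw [hK₀]
    exact mul_pos (div_pos (by linarith) hp₁) (by linarith)
  refine radialEquation_of_eq_rpow_mul_comp_log (N := N) (K := K)
    (φ := homoclinicProfile p K₀) hm (by rw [hK]; ring)
    (homoclinicProfile_nonneg (by nlinarith)) (hasDerivAt_homoclinicProfile (by linarith) K₀)
    (by simpa only [← hK₀] using hasDerivAt_deriv_homoclinicProfile (by linarith) hK₀_pos)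
    (fun ρ hρ τ => ?_) hr t
  rw [hU ρ hρ τ, homoclinicProfile, mul_rpow (by nlinarith) (rpow_nonneg hρ.le _),
    ← rpow_mul hρ.le, neg_mul, mul_one_div]
  ring
end

section
/- With U as defined from K₀ > 0, K ∈ ℝ, p > 1, σ > -2 by U(r,t) = (K₀(p+1)/2 · r^{-(σ+2)})^{1/(p-1)} (1 - tanh²((p-1)√K₀(ln r + Kt)/2))^{1/(p-1)}, for each fixed t the limit as r → 0⁺ of U(r,t) / (r^{√K₀ - (σ+2)/(p-1)} e^{√K₀ K t}) equals (2K₀(p+1))^{1/(p-1)}. -/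
/-!
Since `1 - tanh² (a/2) = 4 eᵃ / (eᵃ + 1)²` and, for `a = (p-1)√K₀ (log r + K t)`, the factor
`(eᵃ)^{1/(p-1)} = r^{√K₀} e^{√K₀ K t}` is exactly the normalisation in the denominator, the quotient
equals `(K₀(p+1)/2 · 4/(eᵃ + 1)²)^{1/(p-1)}`. As `r → 0⁺` we have `a → -∞`, so `eᵃ → 0`.
-/

open Filter Set Topology Real

theorem Real.one_sub_tanh_sq_half (a : ℝ) :
    1 - tanh (a / 2) ^ 2 = 4 * exp a / (exp a + 1) ^ 2 := by
  have hexp : exp a = exp (a / 2) * exp (a / 2) := by rw [← exp_add, add_halves]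
  have hcosh : cosh (a / 2) ≠ 0 := (cosh_pos _).ne'
  rw [tanh_eq_sinh_div_cosh, sinh_eq, cosh_eq, exp_neg] at *
  rw [hexp]
  field_simp
  ring

theorem tendsto_rpow_mul_four_div_exp_add_one_sq_atBot {c : ℝ} (hc : c ≠ 0) (q : ℝ) :
    Tendsto (fun a => (c * (4 / (exp a + 1) ^ 2)) ^ q) atBot (𝓝 ((4 * c) ^ q)) := by
  have hlim : Tendsto (fun a => c * (4 / (exp a + 1) ^ 2)) atBot (𝓝 (c * (4 / (0 + 1) ^ 2))) :=
    (tendsto_const_nhds.div (tendsto_exp_atBot.add_const 1 |>.pow 2) (by norm_num)).const_mul c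
  rw [show c * (4 / (0 + 1) ^ 2 : ℝ) = 4 * c by ring] at hlim
  exact hlim.rpow_const (Or.inl (mul_ne_zero four_ne_zero hc))

theorem tendsto_mul_log_add_nhdsGT_zero_atBot {b : ℝ} (hb : 0 < b) (k : ℝ) :
    Tendsto (fun r => b * (log r + k)) (𝓝[>] 0) atBot :=
  (tendsto_atBot_add_const_right _ k tendsto_log_nhdsGT_zero).const_mul_atBot hb

theorem rpow_one_sub_tanh_sq_half_mul_log_add {r : ℝ} (hr : 0 < r) {b : ℝ} (hb : b ≠ 0) (s k : ℝ) :
    (1 - tanh (b * s * (log r + k) / 2) ^ 2) ^ (1 / b)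
      = (4 / (exp (b * s * (log r + k)) + 1) ^ 2) ^ (1 / b) * (r ^ s * exp (s * k)) := by
  have hexp : exp (b * s * (log r + k) * (1 / b)) = r ^ s * exp (s * k) := by
    rw [rpow_def_of_pos hr, ← exp_add]
    congr 1
    field_simp
  rw [one_sub_tanh_sq_half, mul_div_right_comm, mul_rpow (by positivity) (exp_pos _).le,
    ← exp_mul, hexp]

theorem stmt_9_general (K₀ K p σ : ℝ) (hK₀ : 0 < K₀) (hp : 1 < p)
    (U : ℝ → ℝ → ℝ)
    (hU : ∀ r : ℝ, 0 < r → ∀ t : ℝ,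
      U r t = (K₀ * (p + 1) / 2) ^ (1 / (p - 1)) * r ^ (-(σ + 2) / (p - 1)) *
        (1 - Real.tanh ((p - 1) * Real.sqrt K₀ * (Real.log r + K * t) / 2) ^ 2)
          ^ (1 / (p - 1)))
    (t : ℝ) :
    Tendsto
      (fun r : ℝ => U r t /
        (r ^ (Real.sqrt K₀ - (σ + 2) / (p - 1)) * Real.exp (Real.sqrt K₀ * K * t)))
      (nhdsWithin 0 (Ioi 0))
      (nhds ((2 * K₀ * (p + 1)) ^ (1 / (p - 1)))) := by
  set s := √K₀
  have hs : 0 < s := sqrt_pos.mpr hK₀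
  have hp1 : 0 < p - 1 := by linarith
  have hA : 0 < K₀ * (p + 1) / 2 := by positivity
  have hlim := (tendsto_rpow_mul_four_div_exp_add_one_sq_atBot hA.ne' (1 / (p - 1))).comp
    (tendsto_mul_log_add_nhdsGT_zero_atBot (mul_pos hp1 hs) (K * t))
  rw [show 4 * (K₀ * (p + 1) / 2) = 2 * K₀ * (p + 1) by ring] at hlim
  refine hlim.congr' ?_
  filter_upwards [self_mem_nhdsWithin] with r (hr : 0 < r)
  have hpow : r ^ (s - (σ + 2) / (p - 1)) = r ^ (-(σ + 2) / (p - 1)) * r ^ s := by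
    rw [← rpow_add hr]
    ring_nf
  rw [Function.comp_apply, hU r hr t, rpow_one_sub_tanh_sq_half_mul_log_add hr hp1.ne', hpow,
    mul_rpow hA.le (by positivity), mul_assoc s K t]
  have hr' : r ^ s ≠ 0 := (rpow_pos_of_pos hr s).ne'
  have hrσ : r ^ (-(σ + 2) / (p - 1)) ≠ 0 := (rpow_pos_of_pos hr _).ne'
  field_simp

theorem stmt_9 (K₀ K p σ : ℝ) (hK₀ : 0 < K₀) (hp : 1 < p) (hσ : -2 < σ)
    (U : ℝ → ℝ → ℝ)
    (hU : ∀ r : ℝ, 0 < r → ∀ t : ℝ,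
      U r t = (K₀ * (p + 1) / 2) ^ (1 / (p - 1)) * r ^ (-(σ + 2) / (p - 1)) *
        (1 - Real.tanh ((p - 1) * Real.sqrt K₀ * (Real.log r + K * t) / 2) ^ 2)
          ^ (1 / (p - 1)))
    (t : ℝ) :
    Tendsto
      (fun r : ℝ => U r t /
        (r ^ (Real.sqrt K₀ - (σ + 2) / (p - 1)) * Real.exp (Real.sqrt K₀ * K * t)))
      (nhdsWithin 0 (Ioi 0))
      (nhds ((2 * K₀ * (p + 1)) ^ (1 / (p - 1)))) :=
  stmt_9_general K₀ K p σ hK₀ hp U hU t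
end

section
/- Let N ≥ 3, σ > -2 and p = p_s(σ) = (N+2σ+2)/(N-2), with p_s(σ) > 1. Then K = N-2-2(σ+2)/(p-1) = 0, and the corresponding function U(r) = (K₀(p+1)/2 · r^{-(σ+2)})^{1/(p-1)} (1 - tanh²((p-1)√K₀ ln r / 2))^{1/(p-1)} is a time-independent (stationary) solution: it satisfies U'' + ((N-1)/r)U' + r^σ U^p = 0 on (0,∞), and moreover lim_{r→0⁺} U(r) = (2K₀(p+1))^{1/(p-1)}. -/
open Filter Set Topology Real

/-!
At the critical exponent `p = p_s(σ)` one has `(p - 1)(N - 2) = 2(σ + 2)`, so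
`√K₀ = (N - 2)/2` and `(p - 1)√K₀ = σ + 2`. The identity `1 - tanh² (½ log s) = 4s / (1 + s)²`
with `s = r ^ (σ + 2)` turns `U` into the bubble `c (1 + r ^ (σ + 2)) ^ (-2/(p - 1))` with
`c ^ (p - 1) = 2K₀(p + 1) = (N - 2)(N + σ)`. The equation is then a direct computation of the
radial Laplacian of the bubble, and `U(0⁺) = c`.
-/

noncomputable def bubble (c a b r : ℝ) : ℝ := c * (1 + r ^ a) ^ b

theorem hasDerivAt_bubble (c a b : ℝ) {x : ℝ} (hx : 0 < x) :
    HasDerivAt (bubble c a b) (c * b * a * x ^ (a - 1) * (1 + x ^ a) ^ (b - 1)) x := by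
  have hbase : 1 + x ^ a ≠ 0 := by positivity
  have := (((hasDerivAt_rpow_const (p := a) (Or.inl hx.ne')).const_add 1).rpow_const
    (p := b) (Or.inl hbase)).const_mul c
  exact this.congr_deriv (by ring)

theorem deriv_bubble (c a b : ℝ) :
    EqOn (deriv (bubble c a b)) (fun x ↦ x ^ (a - 1) * bubble (c * b * a) a (b - 1) x) (Ioi 0) :=
  fun x hx ↦ (hasDerivAt_bubble c a b hx).deriv.trans (by simp only [bubble]; ring)

theorem deriv_deriv_bubble (c a b : ℝ) {x : ℝ} (hx : 0 < x) :
    deriv (deriv (bubble c a b)) x = c * b * a * x ^ (a - 2) * (1 + x ^ a) ^ (b - 2) *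
      ((a - 1) * (1 + x ^ a) + (b - 1) * a * x ^ a) := by
  have hpow : HasDerivAt (fun y ↦ y ^ (a - 1)) ((a - 1) * x ^ (a - 2)) x := by
    simpa [sub_sub, one_add_one_eq_two] using hasDerivAt_rpow_const (p := a - 1) (Or.inl hx.ne')
  rw [((deriv_bubble c a b).eventuallyEq_of_mem (isOpen_Ioi.mem_nhds hx)).deriv_eq,
    (hpow.fun_mul (hasDerivAt_bubble (c * b * a) a (b - 1) hx)).deriv]
  have hbase : 0 < 1 + x ^ a := by positivity
  have h1 : (1 + x ^ a) ^ (b - 1) = (1 + x ^ a) ^ (b - 2) * (1 + x ^ a) := by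
    rw [← rpow_add_one hbase.ne']; ring_nf
  have h2 : x ^ (a - 1) * x ^ (a - 1) = x ^ (a - 2) * x ^ a := by
    rw [← rpow_add hx, ← rpow_add hx]; ring_nf
  simp only [bubble, sub_sub, one_add_one_eq_two, h1]
  linear_combination (c * b * a * (b - 1) * a * (1 + x ^ a) ^ (b - 2)) * h2

theorem bubble_solves_henon {n σ p c b : ℝ} (hc : 0 < c) (hcp : c ^ (p - 1) = (n - 2) * (n + σ))
    (hbp : b * (p - 1) = -2) (hbσ : b * (σ + 2) = 2 - n) {r : ℝ} (hr : 0 < r) :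
    deriv (deriv (bubble c (σ + 2) b)) r + ((n - 1) / r) * deriv (bubble c (σ + 2) b) r +
      r ^ σ * bubble c (σ + 2) b r ^ p = 0 := by
  have hbase : 0 < 1 + r ^ (σ + 2) := by positivity
  have hpow : bubble c (σ + 2) b r ^ p = c ^ (p - 1) * c * (1 + r ^ (σ + 2)) ^ (b - 2) := by
    rw [bubble, mul_rpow hc.le (by positivity), ← rpow_mul hbase.le, ← rpow_add_one hc.ne',
      sub_add_cancel]
    congr 2; linear_combination hbp
  have h1 : (1 + r ^ (σ + 2)) ^ (b - 1) = (1 + r ^ (σ + 2)) ^ (b - 2) * (1 + r ^ (σ + 2)) := by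
    rw [← rpow_add_one hbase.ne']; ring_nf
  have h2 : r ^ (σ + 2 - 1) = r ^ σ * r := by rw [← rpow_add_one hr.ne']; ring_nf
  rw [deriv_deriv_bubble c _ b hr, deriv_bubble c _ b hr, hpow, hcp]
  simp only [bubble, h1, h2, add_sub_cancel_right]
  field_simp
  linear_combination (c * r ^ σ * (1 + r ^ (σ + 2)) ^ (b - 2) *
    ((σ + n) * (1 + r ^ (σ + 2)) + (b * (σ + 2) - n - σ) * r ^ (σ + 2))) * hbσ

theorem tendsto_bubble_nhdsGT_zero (c b : ℝ) {a : ℝ} (ha : 0 < a) :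
    Tendsto (bubble c a b) (𝓝[>] 0) (𝓝 c) := by
  have hcont : ContinuousAt (bubble c a b) 0 :=
    continuousAt_const.mul (((continuousAt_const.add
      (continuousAt_rpow_const 0 a (Or.inr ha.le))).rpow_const (Or.inl (by simp [ha.ne']))))
  simpa [bubble, zero_rpow ha.ne'] using hcont.tendsto.mono_left nhdsWithin_le_nhds

theorem one_sub_tanh_sq_mul_log_div_two (a : ℝ) {r : ℝ} (hr : 0 < r) :
    1 - tanh (a * log r / 2) ^ 2 = 4 * r ^ a / (1 + r ^ a) ^ 2 := by
  set t := a * log r / 2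
  have hexp : exp t ^ 2 = r ^ a := by
    rw [← exp_nat_mul, rpow_def_of_pos hr]
    congr 1
    ring
  have : exp t ≠ 0 := (exp_pos t).ne'
  rw [← hexp, tanh_eq, exp_neg]
  field_simp
  ring

theorem rpow_mul_one_sub_tanh_sq_rpow_eq_bubble {k : ℝ} (hk : 0 ≤ k) (a γ : ℝ) {r : ℝ}
    (hr : 0 < r) :
    (k / 2 * r ^ (-a)) ^ γ * (1 - tanh (a * log r / 2) ^ 2) ^ γ =
      bubble ((2 * k) ^ γ) a (-2 * γ) r := by
  have hbase : 0 < 1 + r ^ a := by positivity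
  have hprod : k / 2 * r ^ (-a) * (4 * r ^ a / (1 + r ^ a) ^ 2) =
      2 * k * (1 + r ^ a) ^ (-2 : ℝ) := by
    rw [rpow_neg hr.le, rpow_neg hbase.le, rpow_two]
    field_simp
    ring
  rw [one_sub_tanh_sq_mul_log_div_two a hr, ← mul_rpow (by positivity) (by positivity), hprod,
    mul_rpow (by positivity) (by positivity), ← rpow_mul hbase.le, bubble]

theorem stmt_11 (N : ℕ) (hN : 3 ≤ N) (σ : ℝ) (hσ : -2 < σ)
    (p : ℝ) (hp : p = ((N : ℝ) + 2 * σ + 2) / ((N : ℝ) - 2)) (hp1 : 1 < p)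
    (K₀ : ℝ)
    (hK₀ : K₀ = ((σ + 2) / (p - 1)) * ((N : ℝ) - 2 - (σ + 2) / (p - 1)))
    (U : ℝ → ℝ)
    (hU : ∀ r : ℝ, 0 < r →
      U r = (K₀ * (p + 1) / 2 * r ^ (-(σ + 2))) ^ (1 / (p - 1)) *
        (1 - Real.tanh ((p - 1) * Real.sqrt K₀ * Real.log r / 2) ^ 2) ^ (1 / (p - 1))) :
    (N : ℝ) - 2 - 2 * (σ + 2) / (p - 1) = 0 ∧
    (∀ r : ℝ, 0 < r →
      deriv (deriv U) r + (((N : ℝ) - 1) / r) * deriv U r + r ^ σ * U r ^ p = 0) ∧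
    Tendsto U (nhdsWithin 0 (Ioi 0)) (nhds ((2 * K₀ * (p + 1)) ^ (1 / (p - 1)))) := by
  have hN2 : (0 : ℝ) < N - 2 := by
    have : (3 : ℝ) ≤ N := by exact_mod_cast hN
    linarith
  have hp0 : 0 < p - 1 := by linarith
  have hp1N : (p - 1) * (N - 2) = 2 * (σ + 2) := by
    rw [hp]; field_simp; ring
  have hratio : (σ + 2) / (p - 1) = (N - 2) / 2 := by
    rw [div_eq_div_iff hp0.ne' two_ne_zero]; linarith
  have hK₀sq : K₀ = ((N - 2) / 2) ^ 2 := by rw [hK₀, hratio]; ring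
  have hsqrt : (p - 1) * √K₀ = σ + 2 := by rw [hK₀sq, sqrt_sq (by positivity)]; linarith
  have hbase : 0 < 2 * K₀ * (p + 1) := by
    rw [hK₀sq]; exact mul_pos (by positivity) (by linarith)
  have hcp : ((2 * K₀ * (p + 1)) ^ (1 / (p - 1))) ^ (p - 1) = (N - 2) * (N + σ) := by
    rw [one_div, rpow_inv_rpow hbase.le hp0.ne', hK₀sq]
    linear_combination ((N - 2) / 2) * hp1N
  set c := (2 * K₀ * (p + 1)) ^ (1 / (p - 1))
  have hbubble : EqOn U (bubble c (σ + 2) (-2 * (1 / (p - 1)))) (Ioi 0) := fun r hr ↦ by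
    rw [hU r hr, hsqrt, rpow_mul_one_sub_tanh_sq_rpow_eq_bubble (by linarith) _ _ hr, ← mul_assoc]
  refine ⟨by rw [mul_div_assoc, hratio]; ring, fun r hr ↦ ?_, ?_⟩
  · rw [(hbubble.deriv isOpen_Ioi).deriv isOpen_Ioi hr, hbubble.deriv isOpen_Ioi hr, hbubble hr]
    exact bubble_solves_henon (rpow_pos_of_pos hbase _) hcp (by field_simp)
      (by rw [mul_assoc, one_div_mul_eq_div, hratio]; ring) hr
  · exact (tendsto_bubble_nhdsGT_zero _ _ (by linarith)).congr'
      (eventuallyEq_of_mem self_mem_nhdsWithin hbubble).symm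
end
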